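/- For real numbers a₀ and c > 0, the leading principal (n−1)×(n−1) submatrix W_n° of W_n has eigenvalues exactly {a₀ + c + 2c(i−1)}_{i=1}^{n−1}, which strictly interlace the eigenvalues {a₀ + 2c(i−1)}_{i=1}^{n} of W_n. -/

import Mathlib

/-! With `m = n - 1`, `W_n° = (a₀ + c m) I - c T`, where `T` is the leading `m × m` block of the
spin-`m` angular momentum operator `J_x`: the symmetric tridiagonal matrix with entry
`√(t (2m + 1 - t)) / 2` at `(t - 1, t)`. Eigenvectors of `J_x` come from Krawtchouk polynomials:
the coefficients of `P = (1 - X)^a (1 + X)^b` with `a + b = 2m`, signed and rescaled by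
`√(t! (2m - t)!)`, satisfy the three-term recurrence of `J_x` with eigenvalue `(a - b) / 2`,
because `(1 - X²) P' = (b - a - (a + b) X) P`. For odd `a = 2p + 1`, `b = 2q + 1` the polynomial
`P` is anti-palindromic, so its middle coefficient (index `m`) vanishes and the eigenvector
truncates to an eigenvector of `T` with eigenvalue `p - q`. Letting `q` run over `0, …, m - 1`
gives `m` distinct eigenvalues `a₀ + c + 2cq` of the `m × m` matrix `W_n°`, hence all of them. -/

/-- The 1-indexed off-diagonal magnitudes for the matrix `W_n`. -/
noncomputable def offW (n k : ℕ) : ℝ :=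
  if k = n - 1 then Real.sqrt (n * (n - 1) / 2)
  else Real.sqrt (k * (2 * n - k - 1) / 4)

/-- The matrix `W_n`: symmetric tridiagonal with diagonal `a₀ + c(n-1)` and
off-diagonal entries `-c · offW n k` at (1-indexed) position `(k, k+1)`. -/
noncomputable def Wmat (n : ℕ) (a₀ c : ℝ) : Matrix (Fin n) (Fin n) ℝ :=
  Matrix.of fun i j =>
    if (i : ℕ) = (j : ℕ) then a₀ + c * ((n : ℝ) - 1)
    else if (i : ℕ) + 1 = (j : ℕ) then -c * offW n ((i : ℕ) + 1)
    else if (j : ℕ) + 1 = (i : ℕ) then -c * offW n ((j : ℕ) + 1)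
    else 0

/-- The leading principal submatrix of `W_n` of order `n-1`. -/
noncomputable def WmatSub (n : ℕ) (a₀ c : ℝ) : Matrix (Fin (n - 1)) (Fin (n - 1)) ℝ :=
  (Wmat n a₀ c).submatrix (Fin.castLE (Nat.sub_le n 1)) (Fin.castLE (Nat.sub_le n 1))

open Polynomial Matrix
open scoped Nat

namespace Polynomial

theorem reverse_X {R : Type*} [Semiring R] : (X : R[X]).reverse = 1 := by
  rw [← one_mul X, reverse_mul_X, ← C_1, reverse_C]

theorem reverse_pow {R : Type*} [Semiring R] [NoZeroDivisors R] (f : R[X]) (k : ℕ) :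
    (f ^ k).reverse = f.reverse ^ k := by
  induction k with
  | zero => simpa using reverse_C (1 : R)
  | succ k ih => rw [pow_succ, reverse_mul_of_domain, ih, pow_succ]

theorem reverse_one_add_X {R : Type*} [Semiring R] [Nontrivial R] :
    (1 + X : R[X]).reverse = X + 1 := by
  rw [← C_1, reverse_C_add, reverse_X]
  simp

section Ring

variable {R : Type*} [Ring R]

theorem reverse_one_sub_X [Nontrivial R] : (1 - X : R[X]).reverse = X - 1 := by
  rw [← C_1, sub_eq_add_neg, reverse_C_add, reverse_neg, reverse_X]
  simp [sub_eq_add_neg]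

theorem coeff_eq_zero_of_reverse_eq_neg [NoZeroDivisors R] [CharZero R] {f : R[X]} {m : ℕ}
    (hf : f.reverse = -f) (hdeg : f.natDegree = 2 * m) : f.coeff m = 0 := by
  have h := congrArg (coeff · m) hf
  simp only [coeff_reverse, coeff_neg, hdeg, revAt_le (by omega : m ≤ 2 * m),
    show 2 * m - m = m by omega] at h
  exact self_eq_neg.mp h

end Ring

theorem mul_derivative_pow {R : Type*} [CommSemiring R] (f : R[X]) (a : ℕ) :
    f * derivative (f ^ a) = C (a : R) * f ^ a * derivative f := by
  cases a with
  | zero => simp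
  | succ a =>
    rw [derivative_pow_succ]
    simp only [Nat.cast_add, Nat.cast_one, C_add, C_1]
    ring

end Polynomial

noncomputable def krawtchoukGen (a b : ℕ) : ℝ[X] := (1 - X) ^ a * (1 + X) ^ b

namespace krawtchoukGen

theorem one_sub_X_sq_mul_derivative (a b : ℕ) :
    (1 - X ^ 2) * derivative (krawtchoukGen a b) =
      (C ((b : ℝ) - a) - C ((a : ℝ) + b) * X) * krawtchoukGen a b := by
  have ha := mul_derivative_pow (1 - X : ℝ[X]) a
  have hb := mul_derivative_pow (1 + X : ℝ[X]) b
  simp only [derivative_sub, derivative_add, derivative_one, derivative_X] at ha hb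
  rw [krawtchoukGen, derivative_mul, C_sub, C_add]
  linear_combination (1 + X) * (1 + X : ℝ[X]) ^ b * ha + (1 - X) * (1 - X : ℝ[X]) ^ a * hb

theorem coeff_zero (a b : ℕ) : (krawtchoukGen a b).coeff 0 = 1 := by
  simp [krawtchoukGen, coeff_zero_eq_eval_zero]

theorem coeff_one (a b : ℕ) : (krawtchoukGen a b).coeff 1 = b - a := by
  have h := congrArg (coeff · 0) (one_sub_X_sq_mul_derivative a b)
  simpa [sub_mul, coeff_derivative, coeff_zero, mul_coeff_zero] using h

theorem coeff_add_two (a b k : ℕ) :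
    ((k : ℝ) + 2) * (krawtchoukGen a b).coeff (k + 2) =
      (b - a) * (krawtchoukGen a b).coeff (k + 1) + (k - a - b) * (krawtchoukGen a b).coeff k := by
  have h := congrArg (coeff · (k + 1)) (one_sub_X_sq_mul_derivative a b)
  simp only [sub_mul, one_mul, coeff_sub, coeff_derivative, coeff_C_mul, coeff_X_pow_mul',
    mul_assoc, coeff_X_mul] at h
  rcases k with _ | k
  · simp only [zero_add, Nat.reduceAdd, Nat.cast_one, Nat.not_ofNat_le_one, ↓reduceIte, sub_zero,
      CharP.cast_eq_zero, zero_sub] at h ⊢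
    linarith
  · simp only [show 2 ≤ k + 1 + 1 by omega, ↓reduceIte, Nat.reduceSubDiff] at h
    push_cast at h ⊢
    linarith

theorem natDegree_eq (a b : ℕ) : (krawtchoukGen a b).natDegree = a + b := by
  unfold krawtchoukGen
  compute_degree!

theorem reverse_eq (a b : ℕ) : (krawtchoukGen a b).reverse = (-1) ^ a * krawtchoukGen a b := by
  rw [krawtchoukGen, reverse_mul_of_domain, reverse_pow, reverse_pow, reverse_one_sub_X,
    reverse_one_add_X, show (X - 1 : ℝ[X]) = -1 * (1 - X) by ring, mul_pow]
  ring

theorem coeff_half (p q : ℕ) : (krawtchoukGen (2 * p + 1) (2 * q + 1)).coeff (p + q + 1) = 0 :=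
  coeff_eq_zero_of_reverse_eq_neg
    (by rw [reverse_eq, Odd.neg_one_pow ⟨p, rfl⟩, neg_one_mul])
    (by rw [natDegree_eq]; ring)

end krawtchoukGen

noncomputable def factorialWeight (N t : ℕ) : ℝ := √((t ! : ℝ) * (N - t)!)

theorem factorialWeight_pos (N t : ℕ) : 0 < factorialWeight N t := by
  unfold factorialWeight
  positivity

theorem sqrt_mul_factorialWeight_succ {N t : ℕ} (ht : t < N) :
    √((N : ℝ) - t) * factorialWeight N (t + 1) = √((t : ℝ) + 1) * factorialWeight N t := by
  obtain ⟨r, rfl⟩ : ∃ r, N = t + 1 + r := ⟨N - t - 1, by omega⟩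
  have hN : ((t + 1 + r : ℕ) : ℝ) - t = r + 1 := by push_cast; ring
  rw [factorialWeight, factorialWeight, hN, ← Real.sqrt_mul (by positivity),
    ← Real.sqrt_mul (by positivity), show t + 1 + r - (t + 1) = r by omega,
    show t + 1 + r - t = r + 1 by omega, Nat.factorial_succ, Nat.factorial_succ]
  push_cast
  ring_nf

/-- The `(t - 1, t)` entry of the spin-`m` operator `J_x`. -/
noncomputable def jxEntry (m t : ℕ) : ℝ := √(t * (2 * m + 1 - t)) / 2

theorem jxEntry_zero (m : ℕ) : jxEntry m 0 = 0 := by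
  simp [jxEntry]

theorem jxEntry_succ (m t : ℕ) : jxEntry m (t + 1) = √((t : ℝ) + 1) * √(2 * m - t) / 2 := by
  rw [jxEntry, ← Real.sqrt_mul (by positivity)]
  push_cast
  ring_nf

noncomputable def krawtchoukVec (p q t : ℕ) : ℝ :=
  (-1) ^ t * (krawtchoukGen (2 * p + 1) (2 * q + 1)).coeff t * factorialWeight (2 * (p + q + 1)) t

theorem krawtchoukVec_zero_pos (p q : ℕ) : 0 < krawtchoukVec p q 0 := by
  simpa [krawtchoukVec, krawtchoukGen.coeff_zero] using factorialWeight_pos _ _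

theorem krawtchoukVec_half (p q : ℕ) : krawtchoukVec p q (p + q + 1) = 0 := by
  simp [krawtchoukVec, krawtchoukGen.coeff_half]

theorem jxEntry_mul_krawtchoukVec (p q t : ℕ) (ht : t < 2 * (p + q + 1)) :
    jxEntry (p + q + 1) (t + 1) * krawtchoukVec p q (t + 1) +
      jxEntry (p + q + 1) t * krawtchoukVec p q (t - 1) = (p - q) * krawtchoukVec p q t := by
  set κ := (krawtchoukGen (2 * p + 1) (2 * q + 1)).coeff
  set w := factorialWeight (2 * (p + q + 1))
  have hw {s : ℕ} (hs : s < 2 * (p + q + 1)) :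
      √(2 * ((p : ℝ) + q + 1) - s) * w (s + 1) = √((s : ℝ) + 1) * w s := by
    simpa using sqrt_mul_factorialWeight_succ hs
  rcases t with _ | s <;> simp only [krawtchoukVec, jxEntry_succ] <;> push_cast
  · have h0 := krawtchoukGen.coeff_zero (2 * p + 1) (2 * q + 1)
    have h1 := krawtchoukGen.coeff_one (2 * p + 1) (2 * q + 1)
    have h := hw ht
    simp only [jxEntry_zero, CharP.cast_eq_zero, zero_add, sub_zero, Real.sqrt_one, pow_zero,
      pow_one, zero_mul, add_zero, one_mul] at h h1 ⊢
    push_cast at h1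
    linear_combination (-κ 1 / 2) * h + (-w 0 / 2) * h1 + (-(p - q) * w 0) * h0
  · have hrec := krawtchoukGen.coeff_add_two (2 * p + 1) (2 * q + 1) s
    have hA := hw ht
    have hB := hw (s := s) (by omega)
    have hC := Real.mul_self_sqrt (show (0 : ℝ) ≤ s + 1 + 1 by positivity)
    have hD := Real.mul_self_sqrt (show (0 : ℝ) ≤ 2 * ((p : ℝ) + q + 1) - s by
      have : (s : ℝ) + 1 < 2 * (p + q + 1) := by exact_mod_cast ht
      linarith)
    push_cast at hA hrec ⊢
    linear_combination (√((s : ℝ) + 1 + 1) / 2 * (-1) ^ s * κ (s + 2)) * hA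
      + ((-1) ^ s * κ (s + 2) * w (s + 1) / 2) * hC
      - (√(2 * ((p : ℝ) + q + 1) - s) / 2 * (-1) ^ s * κ s) * hB
      + ((-1) ^ s * κ s * w (s + 1) / 2) * hD
      + ((-1) ^ s * w (s + 1) / 2) * hrec

namespace Matrix

variable {K n : Type*} [Field K] [Fintype n] [DecidableEq n]

theorem mem_spectrum_of_mulVec_eq_smul (A : Matrix n n K) {v : n → K} {μ : K} (hv : v ≠ 0)
    (hAv : A *ᵥ v = μ • v) : μ ∈ spectrum K A := by
  rw [← spectrum_toLin']
  exact Module.End.HasEigenvalue.mem_spectrum <| Module.End.hasEigenvalue_of_hasEigenvector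
    ⟨Module.End.mem_eigenspace_iff.2 (by simpa using hAv), hv⟩

theorem spectrum_eq_of_card_le (A : Matrix n n K) {s : Finset K}
    (hs : ∀ x ∈ s, x ∈ spectrum K A) (hcard : Fintype.card n ≤ s.card) :
    spectrum K A = s := by
  classical
  have hroots (x : K) : x ∈ spectrum K A ↔ x ∈ A.charpoly.roots.toFinset := by
    simp [mem_spectrum_iff_isRoot_charpoly, A.charpoly_monic.ne_zero]
  have hsub : s ⊆ A.charpoly.roots.toFinset := fun x hx => (hroots x).1 (hs x hx)
  have hle : A.charpoly.roots.toFinset.card ≤ s.card :=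
    (Multiset.toFinset_card_le _).trans <| (card_roots' _).trans <| by
      rwa [charpoly_natDegree_eq_dim]
  ext x
  rw [hroots, ← Finset.eq_of_subset_of_card_le hsub hle, Finset.mem_coe]

end Matrix

/-- The symmetric tridiagonal matrix with diagonal `d` and entry `e t` at `(t - 1, t)`. -/
def tridiag {R : Type*} [Zero R] (N : ℕ) (d : R) (e : ℕ → R) : Matrix (Fin N) (Fin N) R :=
  Matrix.of fun i j =>
    if (i : ℕ) = j then d else if (i : ℕ) + 1 = j then e j else if (j : ℕ) + 1 = i then e i else 0

theorem tridiag_mulVec {R : Type*} [CommRing R] {N : ℕ} (d : R) {e : ℕ → R} {v : ℕ → R}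
    (he : e 0 = 0) (hv : v N = 0) (k : Fin N) :
    (tridiag N d e *ᵥ fun j => v j) k = d * v k + e (k + 1) * v (k + 1) + e k * v (k - 1) := by
  have hsplit (j : ℕ) : (if (k : ℕ) = j then d else if (k : ℕ) + 1 = j then e j
      else if j + 1 = k then e k else 0) * v j =
      (if j = k then d * v k else 0) + (if j = k + 1 then e (k + 1) * v (k + 1) else 0) +
        (if j = k - 1 then e k * v (k - 1) else 0) := by
    split_ifs <;> first | omega | (subst_vars; rw [show (k : ℕ) = 0 by omega, he]; ring) |
      (subst_vars; ring)
  have hlast : (if (k : ℕ) + 1 ∈ Finset.range N then e (k + 1) * v (k + 1) else 0) =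
      e (k + 1) * v (k + 1) := by
    split_ifs with h
    · rfl
    · rw [show (k : ℕ) + 1 = N by rw [Finset.mem_range] at h; omega, hv, mul_zero]
  simp only [mulVec, dotProduct, tridiag, of_apply]
  rw [Fin.sum_univ_eq_sum_range (fun j => (if (k : ℕ) = j then d else if (k : ℕ) + 1 = j then e j
      else if j + 1 = k then e k else 0) * v j), Finset.sum_congr rfl fun j _ => hsplit j,
    Finset.sum_add_distrib, Finset.sum_add_distrib, Finset.sum_ite_eq', Finset.sum_ite_eq',
    Finset.sum_ite_eq', hlast, if_pos (Finset.mem_range.2 k.isLt), if_pos (Finset.mem_range.2 (by omega))]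

theorem offW_succ_eq_jxEntry {m t : ℕ} (ht : t < m) : offW (m + 1) t = jxEntry m t := by
  rw [offW, if_neg (by omega), jxEntry,
    show (t : ℝ) * (2 * ((m + 1 : ℕ) : ℝ) - t - 1) / 4 = t * (2 * m + 1 - t) / 2 ^ 2 by
      push_cast; ring,
    Real.sqrt_div' _ (by norm_num), Real.sqrt_sq (by norm_num)]

theorem WmatSub_succ_eq_tridiag (m : ℕ) (a₀ c : ℝ) :
    WmatSub (m + 1) a₀ c = tridiag m (a₀ + c * m) fun t => -c * jxEntry m t := by
  ext i j
  simp only [WmatSub, Wmat, tridiag, submatrix_apply, of_apply, Fin.val_castLE]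
  split_ifs with h₁ h₂ h₃
  · push_cast
    ring
  · rw [h₂, offW_succ_eq_jxEntry (m := m) (by omega)]
  · rw [h₃, offW_succ_eq_jxEntry (m := m) (by omega)]
  · rfl

theorem mem_spectrum_WmatSub {n q : ℕ} (hq : q < n - 1) (a₀ c : ℝ) :
    a₀ + c + 2 * c * q ∈ spectrum ℝ (WmatSub n a₀ c) := by
  obtain ⟨p, rfl⟩ : ∃ p, n = p + q + 1 + 1 := ⟨n - q - 2, by omega⟩
  rw [WmatSub_succ_eq_tridiag]
  refine mem_spectrum_of_mulVec_eq_smul _ (v := fun j : Fin (p + q + 1) => krawtchoukVec p q j)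
    (fun h => (krawtchoukVec_zero_pos p q).ne' (congrFun h ⟨0, by omega⟩)) (funext fun k => ?_)
  rw [tridiag_mulVec _ (by simp [jxEntry_zero]) (krawtchoukVec_half p q)]
  have hrow := jxEntry_mul_krawtchoukVec p q k (by omega)
  simp only [Pi.smul_apply, smul_eq_mul]
  push_cast
  linear_combination (-c) * hrow

theorem stmt_9_general (n : ℕ) (a₀ c : ℝ) (hc : 0 < c) :
    spectrum ℝ (WmatSub n a₀ c) = {x : ℝ | ∃ i < n - 1, x = a₀ + c + 2 * c * (i : ℝ)} ∧
      ∀ i < n - 1,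
        a₀ + 2 * c * (i : ℝ) < a₀ + c + 2 * c * (i : ℝ) ∧
        a₀ + c + 2 * c * (i : ℝ) < a₀ + 2 * c * ((i : ℝ) + 1) := by
  refine ⟨?_, fun i _ => ⟨by linarith, by linarith⟩⟩
  have hinj : Function.Injective fun i : ℕ => a₀ + c + 2 * c * i := fun i j h => by
    simpa [hc.ne'] using h
  rw [spectrum_eq_of_card_le _ (s := (Finset.range (n - 1)).image fun i : ℕ => a₀ + c + 2 * c * i)]
  · ext x
    simp [eq_comm]
  · simp only [Finset.mem_image, Finset.mem_range]
    rintro _ ⟨i, hi, rfl⟩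
    exact mem_spectrum_WmatSub hi a₀ c
  · simp [Finset.card_image_of_injective _ hinj]

theorem stmt_9 (n : ℕ) (hn : 2 ≤ n) (a₀ c : ℝ) (hc : 0 < c) :
    spectrum ℝ (WmatSub n a₀ c) = {x : ℝ | ∃ i < n - 1, x = a₀ + c + 2 * c * (i : ℝ)} ∧
      ∀ i < n - 1,
        a₀ + 2 * c * (i : ℝ) < a₀ + c + 2 * c * (i : ℝ) ∧
        a₀ + c + 2 * c * (i : ℝ) < a₀ + 2 * c * ((i : ℝ) + 1) :=
  stmt_9_general n a₀ c hc
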